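/- Let P be positive semidefinite with positive eigenvalues a₁,…,a_r. P has a companion if and only if there exist orthonormal eigenvectors v₁,…,v_r for the positive eigenvalues and orthonormal vectors v_{r+1},…,v_{r+s} in ker P such that Σ_{i=1}^r (a_i / tr P) (v_i ∘ v̄_i) lies in the convex hull of {v_j ∘ v̄_j : r+1 ≤ j ≤ r+s}. -/

import Mathlib

open scoped ComplexOrder

noncomputable def opNorm {n : Type*} [Fintype n] [DecidableEq n] (M : Matrix n n ℂ) : ℝ :=
  ‖(Matrix.toEuclideanCLM (𝕜 := ℂ) M : EuclideanSpace ℂ n →L[ℂ] EuclideanSpace ℂ n)‖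

/-- `M` is minimal: its operator norm is ≤ that of `M + D` for every real diagonal `D`. -/
def IsMinimal {n : Type*} [Fintype n] [DecidableEq n] (M : Matrix n n ℂ) : Prop :=
  ∀ d : n → ℝ, opNorm M ≤ opNorm (M + Matrix.diagonal fun i => (d i : ℂ))

/-- The family `v` is orthonormal for the standard inner product of `ℂⁿ`. -/
def ONFamily {ι : Type*} [DecidableEq ι] {n : Type*} [Fintype n]
    (v : ι → (n → ℂ)) : Prop :=
  ∀ i j, dotProduct (star (v i)) (v j) = if i = j then (1 : ℂ) else 0

/-!
Write `P = ∑ aᵢ uᵢuᵢ*`. Given a companion `Q`, the eigenvectors `w_j` of `Q` with eigenvalues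
`μ_j > 0` lie in `ker P`, so they are orthogonal to `u₁, …, u_r`; together with these they form an
orthonormal family (whence `r + s ≤ n`), and `diag P = diag Q = ∑ μ_j (w_j ∘ w̄_j)` with
`∑ μ_j = tr Q = tr P`, i.e. the weights `μ_j / tr P` witness the convex-hull condition.
Conversely `Q = tr P · ∑ t_j v_j v_j*` is a companion. Both directions rest on
`P = ∑ aᵢ vᵢvᵢ*` for *any* orthonormal eigenvectors `vᵢ` of the positive eigenvalues: for `M` the
right-hand side, `tr ((P - M)ᴴ (P - M)) = ∑ aᵢ² - ∑ aᵢ² - ∑ aᵢ² + ∑ aᵢ² = 0`.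
-/

open Matrix

def OrthonormalOn {ι n : Type*} [DecidableEq ι] [Fintype n] (p : ι → Prop) (v : ι → n → ℂ) :
    Prop :=
  ∀ i j, p i → p j → star (v i) ⬝ᵥ v j = if i = j then (1 : ℂ) else 0

def rankOneSum {ι n : Type*} [Fintype ι] (c : ι → ℝ) (v : ι → n → ℂ) : Matrix n n ℂ :=
  ∑ i, (c i : ℂ) • vecMulVec (v i) (star (v i))

section RankOneSum

variable {ι n : Type*} [Fintype ι] (c : ι → ℝ) (v : ι → n → ℂ)

theorem rankOneSum_apply_self (k : n) :
    rankOneSum c v k k = ((∑ i, c i * ‖v i k‖ ^ 2 : ℝ) : ℂ) := by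
  simp [rankOneSum, Matrix.sum_apply, vecMulVec_apply, Complex.mul_conj']

variable [Fintype n]

theorem isHermitian_rankOneSum : (rankOneSum c v).IsHermitian :=
  isSelfAdjoint_sum _ fun i _ =>
    IsSelfAdjoint.smul (Complex.conj_ofReal (c i))
      (posSemidef_vecMulVec_self_star (v i)).isHermitian

theorem posSemidef_rankOneSum (hc : ∀ i, 0 ≤ c i) : (rankOneSum c v).PosSemidef :=
  posSemidef_sum _ fun i _ =>
    (posSemidef_vecMulVec_self_star (v i)).smul (Complex.zero_le_real.mpr (hc i))

theorem rankOneSum_mulVec (x : n → ℂ) :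
    rankOneSum c v *ᵥ x = ∑ i, ((c i : ℂ) * (star (v i) ⬝ᵥ x)) • v i := by
  simp [rankOneSum, sum_mulVec, smul_mulVec, vecMulVec_mulVec, mul_smul]

theorem trace_mul_rankOneSum (A : Matrix n n ℂ) :
    (A * rankOneSum c v).trace = ∑ i, (c i : ℂ) * (star (v i) ⬝ᵥ (A *ᵥ v i)) := by
  simp [rankOneSum, Finset.mul_sum, trace_sum, mul_vecMulVec, trace_vecMulVec, dotProduct_comm]

theorem mul_rankOneSum_eq_zero {A : Matrix n n ℂ} (hA : ∀ i, c i ≠ 0 → A *ᵥ v i = 0) :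
    A * rankOneSum c v = 0 := by
  simp only [rankOneSum, Finset.mul_sum, mul_smul_comm, mul_vecMulVec]
  refine Finset.sum_eq_zero fun i _ => ?_
  by_cases hi : c i = 0
  · simp [hi]
  · simp [hA i hi]

variable [DecidableEq ι]

theorem rankOneSum_mulVec_of_orthonormalOn (hv : OrthonormalOn (c · ≠ 0) v) {j : ι}
    (hj : c j ≠ 0) : rankOneSum c v *ᵥ v j = (c j : ℂ) • v j := by
  rw [rankOneSum_mulVec, Finset.sum_eq_single j]
  · simp [hv j j hj hj]
  · intro i _ hij
    by_cases hi : c i = 0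
    · simp [hi]
    · simp [hv i j hi hj, hij]
  · simp

theorem mulVec_eq_zero_of_mul_rankOneSum_eq_zero (hv : OrthonormalOn (c · ≠ 0) v)
    {A : Matrix n n ℂ} (hA : A * rankOneSum c v = 0) {i : ι} (hi : c i ≠ 0) : A *ᵥ v i = 0 := by
  have h := congrArg (· *ᵥ v i) hA
  simp only [← mulVec_mulVec, rankOneSum_mulVec_of_orthonormalOn c v hv hi, mulVec_smul,
    zero_mulVec] at h
  exact (smul_eq_zero.mp h).resolve_left (by exact_mod_cast hi)

theorem trace_mul_rankOneSum_of_mulVec_eq (hv : OrthonormalOn (c · ≠ 0) v) (A : Matrix n n ℂ)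
    (hA : ∀ i, c i ≠ 0 → A *ᵥ v i = (c i : ℂ) • v i) :
    (A * rankOneSum c v).trace = ∑ i, (c i : ℂ) ^ 2 := by
  rw [trace_mul_rankOneSum]
  refine Finset.sum_congr rfl fun i _ => ?_
  by_cases hi : c i = 0
  · simp [hi]
  · simp [hA i hi, hv i i hi hi, sq]

theorem trace_rankOneSum (hv : OrthonormalOn (c · ≠ 0) v) :
    (rankOneSum c v).trace = ∑ i, (c i : ℂ) := by
  simp only [rankOneSum, trace_sum, trace_smul, trace_vecMulVec]
  refine Finset.sum_congr rfl fun i _ => ?_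
  by_cases hi : c i = 0
  · simp [hi]
  · simp [dotProduct_comm (v i), hv i i hi hi]

theorem rankOneSum_eq_of_mulVec_eq {u w : ι → n → ℂ} (hu : OrthonormalOn (c · ≠ 0) u)
    (hw : OrthonormalOn (c · ≠ 0) w)
    (hev : ∀ i, c i ≠ 0 → rankOneSum c u *ᵥ w i = (c i : ℂ) • w i) :
    rankOneSum c w = rankOneSum c u := by
  set P := rankOneSum c u
  set M := rankOneSum c w
  have hPP : (P * P).trace = ∑ i, (c i : ℂ) ^ 2 :=
    trace_mul_rankOneSum_of_mulVec_eq c u hu P fun i hi =>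
      rankOneSum_mulVec_of_orthonormalOn c u hu hi
  have hPM : (P * M).trace = ∑ i, (c i : ℂ) ^ 2 :=
    trace_mul_rankOneSum_of_mulVec_eq c w hw P hev
  have hMM : (M * M).trace = ∑ i, (c i : ℂ) ^ 2 :=
    trace_mul_rankOneSum_of_mulVec_eq c w hw M fun i hi =>
      rankOneSum_mulVec_of_orthonormalOn c w hw hi
  have hMP : (M * P).trace = ∑ i, (c i : ℂ) ^ 2 := by rw [trace_mul_comm, hPM]
  have hH : (M - P)ᴴ = M - P := ((isHermitian_rankOneSum c w).sub (isHermitian_rankOneSum c u)).eq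
  have hD : ((M - P)ᴴ * (M - P)).trace = 0 := by
    rw [hH]
    simp only [sub_mul, mul_sub, trace_sub, hPP, hPM, hMP, hMM, sub_self]
  exact sub_eq_zero.mp (trace_conjTranspose_mul_self_eq_zero_iff.mp hD)

end RankOneSum

section ONFamily

variable {ι n : Type*} [DecidableEq ι] [Fintype n]

theorem ONFamily.orthonormalOn {v : ι → n → ℂ} (hv : ONFamily v) (p : ι → Prop) :
    OrthonormalOn p v :=
  fun i j _ _ => hv i j

theorem OrthonormalOn.mono {p q : ι → Prop} {v : ι → n → ℂ} (hv : OrthonormalOn p v)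
    (h : ∀ i, q i → p i) : OrthonormalOn q v :=
  fun i j hi hj => hv i j (h i hi) (h j hj)

theorem ONFamily.comp {κ : Type*} [DecidableEq κ] {v : ι → n → ℂ} (hv : ONFamily v) {e : κ → ι}
    (he : Function.Injective e) : ONFamily (v ∘ e) := by
  intro i j
  simp [hv (e i) (e j), he.eq_iff]

theorem ONFamily.append {m k : ℕ} {f : Fin m → n → ℂ} {g : Fin k → n → ℂ} (hf : ONFamily f)
    (hg : ONFamily g) (hfg : ∀ i j, star (f i) ⬝ᵥ g j = 0) : ONFamily (Fin.append f g) := by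
  have hne (i : Fin m) (j : Fin k) : Fin.castAdd k i ≠ Fin.natAdd m j := fun h => by
    have := congrArg Fin.val h
    simp only [Fin.val_castAdd, Fin.val_natAdd] at this
    omega
  intro i j
  refine Fin.addCases (fun i => ?_) (fun i => ?_) i <;>
    refine Fin.addCases (fun j => ?_) (fun j => ?_) j
  · simpa using hf i j
  · simp [hfg i j, hne i j]
  · simp [star_dotProduct, hfg j i, (hne j i).symm]
  · simpa using hg i j

theorem ONFamily.card_le [Fintype ι] {v : ι → n → ℂ} (hv : ONFamily v) :
    Fintype.card ι ≤ Fintype.card n := by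
  have hon : Orthonormal ℂ fun i => WithLp.toLp 2 (v i) := by
    rw [orthonormal_iff_ite]
    intro i j
    rw [EuclideanSpace.inner_toLp_toLp, dotProduct_comm, hv]
  simpa using hon.linearIndependent.fintype_card_le_finrank

end ONFamily

theorem Matrix.IsHermitian.eq_rankOneSum {n : Type*} [Fintype n] [DecidableEq n]
    {Q : Matrix n n ℂ} (hQ : Q.IsHermitian) :
    Q = rankOneSum hQ.eigenvalues fun j => ⇑(hQ.eigenvectorBasis j) := by
  conv_lhs => rw [hQ.spectral_theorem, Unitary.conjStarAlgAut_apply]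
  ext i k
  simp only [rankOneSum, mul_apply, diagonal_apply, conjTranspose_apply, sum_apply, smul_apply,
    vecMulVec_apply, Pi.star_apply, IsHermitian.eigenvectorUnitary_apply, Function.comp_apply,
    mul_ite, mul_zero, Finset.sum_ite_eq', star_eq_conjTranspose, Finset.mem_univ, if_true,
    smul_eq_mul, RCLike.star_def]
  exact Finset.sum_congr rfl fun j _ => (mul_right_comm _ _ _).trans (mul_comm _ _)

theorem Matrix.IsHermitian.onFamily_eigenvectorBasis {n : Type*} [Fintype n] [DecidableEq n]
    {Q : Matrix n n ℂ} (hQ : Q.IsHermitian) : ONFamily fun j => ⇑(hQ.eigenvectorBasis j) := by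
  intro i j
  rw [← orthonormal_iff_ite.mp hQ.eigenvectorBasis.orthonormal i j,
    EuclideanSpace.inner_eq_star_dotProduct, dotProduct_comm]

theorem Matrix.IsHermitian.star_dotProduct_eq_zero {n : Type*} [Fintype n] {A : Matrix n n ℂ}
    (hA : A.IsHermitian) {x y : n → ℂ} {c : ℝ} (hc : c ≠ 0) (hx : A *ᵥ x = (c : ℂ) • x)
    (hy : A *ᵥ y = 0) : star x ⬝ᵥ y = 0 := by
  have h : star (A *ᵥ x) ⬝ᵥ y = star x ⬝ᵥ (A *ᵥ y) := by
    rw [star_mulVec, hA.eq, dotProduct_mulVec]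
  rw [hx, hy, star_smul, smul_dotProduct, dotProduct_zero] at h
  simpa [hc] using h

theorem Matrix.PosSemidef.exists_rankOneSum {n : Type*} [Fintype n] [DecidableEq n]
    {Q : Matrix n n ℂ} (hQ : Q.PosSemidef) :
    ∃ (s : ℕ) (μ : Fin s → ℝ) (w : Fin s → n → ℂ),
      (∀ k, 0 < μ k) ∧ ONFamily w ∧ Q = rankOneSum μ w := by
  have hH := hQ.isHermitian
  set μ := hH.eigenvalues
  let e : Fin (Fintype.card {j // μ j ≠ 0}) → n := fun k => ((Fintype.equivFin _).symm k).1
  have he : Function.Injective e := Subtype.val_injective.comp (Fintype.equivFin _).symm.injective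
  refine ⟨_, μ ∘ e, (fun j => ⇑(hH.eigenvectorBasis j)) ∘ e, fun k => ?_,
    hH.onFamily_eigenvectorBasis.comp he, ?_⟩
  · exact (hQ.eigenvalues_nonneg _).lt_of_ne' ((Fintype.equivFin _).symm k).2
  · refine hH.eq_rankOneSum.trans
      (Fintype.sum_of_injective e he _ _ (fun j hj => ?_) fun _ => rfl).symm
    have hμ : hH.eigenvalues j = 0 := by
      by_contra h
      exact hj ⟨Fintype.equivFin _ ⟨j, h⟩, by simp [e]⟩
    simp [hμ]

section ExtendCastLE

variable {m n : ℕ} (h : m ≤ n)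

theorem Fin.extend_castLE_of_lt {α : Type*} [Zero α] (f : Fin m → α) {i : Fin n}
    (hi : (i : ℕ) < m) :
    Function.extend (Fin.castLE h) f 0 i = f ⟨i, hi⟩ :=
  (Fin.castLE_injective h).extend_apply f 0 ⟨i, hi⟩

theorem Fin.extend_castLE_of_le {α : Type*} [Zero α] (f : Fin m → α) {i : Fin n}
    (hi : m ≤ (i : ℕ)) :
    Function.extend (Fin.castLE h) f 0 i = 0 :=
  Function.extend_apply' _ _ _ fun ⟨j, hj⟩ => by
    have := congrArg Fin.val hj
    simp only [Fin.val_castLE] at this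
    omega

theorem Fin.sum_comp_castLE_of_eq_zero {M : Type*} [AddCommMonoid M] (g : Fin n → M)
    (hg : ∀ i : Fin n, m ≤ (i : ℕ) → g i = 0) : ∑ i : Fin m, g (Fin.castLE h i) = ∑ i, g i :=
  Fintype.sum_of_injective _ (Fin.castLE_injective h) _ _
    (fun i hi => hg i (not_lt.mp fun hlt => hi ⟨⟨i, hlt⟩, rfl⟩)) fun _ => rfl

theorem ONFamily.orthonormalOn_extend_castLE {k : Type*} [Fintype k] {G : Fin m → k → ℂ}
    (hG : ONFamily G) :
    OrthonormalOn (fun i : Fin n => (i : ℕ) < m) (Function.extend (Fin.castLE h) G 0) := by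
  intro i j hi hj
  rw [Fin.extend_castLE_of_lt h G hi, Fin.extend_castLE_of_lt h G hj, hG]
  simp [Fin.ext_iff]

end ExtendCastLE

def HasCompanion {n : Type*} [Fintype n] (P : Matrix n n ℂ) : Prop :=
  ∃ Q : Matrix n n ℂ, Q.PosSemidef ∧ P * Q = 0 ∧ ∀ i, P i i = Q i i

def HasConvexHullWitness {n : ℕ} (P : Matrix (Fin n) (Fin n) ℂ) (a : Fin n → ℝ) (r : ℕ) :
    Prop :=
  ∃ s : ℕ, r + s ≤ n ∧
    ∃ v : Fin n → Fin n → ℂ,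
      OrthonormalOn (fun i : Fin n => (i : ℕ) < r + s) v ∧
      (∀ i : Fin n, (i : ℕ) < r + s → P *ᵥ v i = (a i : ℂ) • v i) ∧
      ∃ t : Fin n → ℝ, (∀ j, 0 ≤ t j) ∧
        (∀ j : Fin n, (j : ℕ) < r ∨ r + s ≤ (j : ℕ) → t j = 0) ∧
        (∑ j, t j) = 1 ∧
        ∀ k, ∑ i, (a i / (∑ l, a l)) * ‖v i k‖ ^ 2 = ∑ j, t j * ‖v j k‖ ^ 2

section Companion

variable {ι n : Type*} [Fintype ι] [DecidableEq ι] [Fintype n] {P : Matrix n n ℂ} {a : ι → ℝ}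
  {u v : ι → n → ℂ}

theorem apply_self_eq_of_mulVec_eq (hu : OrthonormalOn (a · ≠ 0) u) (hP : P = rankOneSum a u)
    (hv : OrthonormalOn (a · ≠ 0) v) (hev : ∀ i, a i ≠ 0 → P *ᵥ v i = (a i : ℂ) • v i) (k : n) :
    P k k = ((∑ i, a i * ‖v i k‖ ^ 2 : ℝ) : ℂ) := by
  subst hP
  rw [← rankOneSum_eq_of_mulVec_eq a hu hv hev, rankOneSum_apply_self]

theorem hasCompanion_of_diag_eq (hu : OrthonormalOn (a · ≠ 0) u) (hP : P = rankOneSum a u)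
    (hv : OrthonormalOn (a · ≠ 0) v) (hev : ∀ i, a i ≠ 0 → P *ᵥ v i = (a i : ℂ) • v i)
    (hT : 0 < ∑ l, a l) {t : ι → ℝ} (ht : ∀ j, 0 ≤ t j) (hker : ∀ j, t j ≠ 0 → P *ᵥ v j = 0)
    (hdiag : ∀ k, ∑ i, a i / (∑ l, a l) * ‖v i k‖ ^ 2 = ∑ j, t j * ‖v j k‖ ^ 2) :
    HasCompanion P := by
  refine ⟨rankOneSum (fun j => (∑ l, a l) * t j) v,
    posSemidef_rankOneSum _ _ fun j => mul_nonneg hT.le (ht j),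
    mul_rankOneSum_eq_zero _ _ fun j hj => hker j (right_ne_zero_of_mul hj), fun k => ?_⟩
  rw [apply_self_eq_of_mulVec_eq hu hP hv hev, rankOneSum_apply_self, Complex.ofReal_inj]
  have h := congrArg ((∑ l, a l) * ·) (hdiag k)
  simp only [div_mul_eq_mul_div, ← Finset.sum_div, mul_div_cancel₀ _ hT.ne', Finset.mul_sum] at h
  simpa only [mul_assoc] using h

end Companion

theorem hasConvexHullWitness_of_append {n r s : ℕ} (hrs : r + s ≤ n)
    {P : Matrix (Fin n) (Fin n) ℂ} {a : Fin n → ℝ} (ha0 : ∀ i : Fin n, r ≤ (i : ℕ) → a i = 0)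
    {u : Fin n → Fin n → ℂ} (hu : ONFamily u) (hP : P = rankOneSum a u)
    {G : Fin (r + s) → Fin n → ℂ} (hG : ONFamily G)
    (hGev : ∀ i, P *ᵥ G i = (a (Fin.castLE hrs i) : ℂ) • G i) (hT : (∑ l, a l) ≠ 0)
    {τ : Fin s → ℝ} (hτ0 : ∀ k, 0 ≤ τ k) (hτ1 : ∑ k, τ k = 1)
    (hdiag : ∀ k, P k k = (((∑ l, a l) * ∑ j, τ j * ‖G (Fin.natAdd r j) k‖ ^ 2 : ℝ) : ℂ)) :
    HasConvexHullWitness P a r := by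
  set v := Function.extend (Fin.castLE hrs) G 0
  set t := Function.extend (Fin.castLE hrs) (Fin.append (0 : Fin r → ℝ) τ) 0
  have hv : OrthonormalOn (fun i : Fin n => (i : ℕ) < r + s) v := hG.orthonormalOn_extend_castLE hrs
  have hev : ∀ i : Fin n, (i : ℕ) < r + s → P *ᵥ v i = (a i : ℂ) • v i := fun i hi => by
    rw [show v i = G ⟨i, hi⟩ from Fin.extend_castLE_of_lt hrs G hi]
    exact hGev ⟨i, hi⟩
  have ht : ∀ j : Fin n, (j : ℕ) < r ∨ r + s ≤ (j : ℕ) → t j = 0 := by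
    rintro j (hj | hj)
    · rw [show t j = Fin.append 0 τ ⟨j, by omega⟩ from Fin.extend_castLE_of_lt hrs _ _]
      exact Fin.append_left _ _ ⟨j, hj⟩
    · exact Fin.extend_castLE_of_le hrs _ hj
  have hsum (g : Fin n → ℝ) :
      ∑ j, t j * g j = ∑ k, τ k * g (Fin.castLE hrs (Fin.natAdd r k)) := by
    rw [← Fin.sum_comp_castLE_of_eq_zero hrs _ fun j hj => by rw [ht j (Or.inr hj), zero_mul]]
    simp [t, (Fin.castLE_injective hrs).extend_apply, Fin.sum_univ_add]
  refine ⟨s, hrs, v, hv, hev, t, fun j => ?_, ht, ?_, fun k => ?_⟩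
  · by_cases hj : (j : ℕ) < r + s
    · rw [show t j = Fin.append 0 τ ⟨j, hj⟩ from Fin.extend_castLE_of_lt hrs _ hj]
      exact Fin.addCases (motive := fun i => 0 ≤ Fin.append 0 τ i) (by simp)
        (by simpa using hτ0) _
    · rw [show t j = 0 from Fin.extend_castLE_of_le hrs _ (not_lt.mp hj)]
  · simpa [hτ1] using hsum 1
  · have hsupp : ∀ i : Fin n, a i ≠ 0 → (i : ℕ) < r + s := fun i hi => by
      by_contra h
      exact hi (ha0 i (by omega))
    have hPkk := apply_self_eq_of_mulVec_eq (hu.orthonormalOn _) hP (hv.mono hsupp)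
      (fun i hi => hev i (hsupp i hi)) k
    rw [hdiag, Complex.ofReal_inj] at hPkk
    simp_rw [hsum, div_mul_eq_mul_div]
    rw [← Finset.sum_div, ← hPkk, mul_div_cancel_left₀ _ hT]
    simp [v, (Fin.castLE_injective hrs).extend_apply]

theorem HasCompanion.hasConvexHullWitness {n r : ℕ} (hrn : r ≤ n)
    {P : Matrix (Fin n) (Fin n) ℂ} {a : Fin n → ℝ} (hapos : ∀ i : Fin n, (i : ℕ) < r → 0 < a i)
    (ha0 : ∀ i : Fin n, r ≤ (i : ℕ) → a i = 0) {u : Fin n → Fin n → ℂ} (hu : ONFamily u)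
    (hP : P = rankOneSum a u) (hT : 0 < ∑ l, a l) (hPc : HasCompanion P) :
    HasConvexHullWitness P a r := by
  obtain ⟨Q, hQ, hPQ, hdiag⟩ := hPc
  obtain ⟨s, μ, w, hμ, hw, rfl⟩ := hQ.exists_rankOneSum
  have hPw : ∀ k, P *ᵥ w k = 0 := fun k =>
    mulVec_eq_zero_of_mul_rankOneSum_eq_zero μ w (hw.orthonormalOn _) hPQ (hμ k).ne'
  have hPu : ∀ i, a i ≠ 0 → P *ᵥ u i = (a i : ℂ) • u i := fun i hi =>
    hP ▸ rankOneSum_mulVec_of_orthonormalOn a u (hu.orthonormalOn _) hi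
  have hPH : P.IsHermitian := hP ▸ isHermitian_rankOneSum a u
  set G := Fin.append (u ∘ Fin.castLE hrn) w
  have hG : ONFamily G := (hu.comp (Fin.castLE_injective hrn)).append hw fun i k =>
    hPH.star_dotProduct_eq_zero (hapos _ i.2).ne' (hPu _ (hapos _ i.2).ne') (hPw k)
  have hrs : r + s ≤ n := by simpa using hG.card_le
  have hGev : ∀ i, P *ᵥ G i = (a (Fin.castLE hrs i) : ℂ) • G i := by
    intro i
    induction i using Fin.addCases with
    | left i =>
      simp only [G, Fin.append_left, Function.comp_apply]
      exact hPu _ (hapos _ i.2).ne'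
    | right k => simp [G, hPw k, ha0 (Fin.castLE hrs (Fin.natAdd r k)) (by simp)]
  have htr : ∑ k, μ k = ∑ l, a l := by
    have h : P.trace = (rankOneSum μ w).trace := Finset.sum_congr rfl fun i _ => hdiag i
    rw [hP, trace_rankOneSum a u (hu.orthonormalOn _),
      trace_rankOneSum μ w (hw.orthonormalOn _)] at h
    exact_mod_cast h.symm
  refine hasConvexHullWitness_of_append hrs ha0 hu hP hG hGev hT.ne'
    (τ := fun k => μ k / ∑ l, a l) (fun k => div_nonneg (hμ k).le hT.le)
    (by rw [← Finset.sum_div, htr, div_self hT.ne']) fun k => ?_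
  rw [hdiag, rankOneSum_apply_self, Finset.mul_sum]
  congr 1
  refine Finset.sum_congr rfl fun j _ => ?_
  simp only [Fin.append_right, G]
  field_simp

theorem stmt12 (n r : ℕ) (hr : 0 < r) (hrn : r < n)
    (P : Matrix (Fin n) (Fin n) ℂ) (a : Fin n → ℝ)
    (hapos : ∀ i : Fin n, (i : ℕ) < r → 0 < a i)
    (ha0 : ∀ i : Fin n, r ≤ (i : ℕ) → a i = 0)
    (u : Fin n → (Fin n → ℂ)) (hu : ONFamily u)
    (hP : P = ∑ i, (a i : ℂ) • Matrix.vecMulVec (u i) (star (u i))) :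
    (∃ Q : Matrix (Fin n) (Fin n) ℂ, Q.PosSemidef ∧ P * Q = 0 ∧ ∀ i, P i i = Q i i) ↔
    (∃ s : ℕ, r + s ≤ n ∧
      ∃ v : Fin n → (Fin n → ℂ),
        (∀ i j : Fin n, (i : ℕ) < r + s → (j : ℕ) < r + s →
          dotProduct (star (v i)) (v j) = if i = j then (1 : ℂ) else 0) ∧
        (∀ i : Fin n, (i : ℕ) < r + s → P.mulVec (v i) = (a i : ℂ) • v i) ∧
        ∃ t : Fin n → ℝ, (∀ j, 0 ≤ t j) ∧
          (∀ j : Fin n, (j : ℕ) < r ∨ r + s ≤ (j : ℕ) → t j = 0) ∧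
          (∑ j, t j) = 1 ∧
          ∀ k, ∑ i, (a i / (∑ l, a l)) * ‖v i k‖ ^ 2 = ∑ j, t j * ‖v j k‖ ^ 2) := by
  have hT : 0 < ∑ l, a l := Finset.sum_pos'
    (fun i _ => if hi : (i : ℕ) < r then (hapos i hi).le else (ha0 i (not_lt.mp hi)).ge)
    ⟨⟨0, hr.trans hrn⟩, Finset.mem_univ _, hapos _ hr⟩
  refine ⟨HasCompanion.hasConvexHullWitness hrn.le hapos ha0 hu hP hT, ?_⟩
  rintro ⟨s, -, v, hv, hev, t, ht0, htz, -, hdiag⟩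
  have hsupp (i : Fin n) (hi : a i ≠ 0) : (i : ℕ) < r + s := by
    by_contra h
    exact hi (ha0 i (by omega))
  refine hasCompanion_of_diag_eq (hu.orthonormalOn _) hP (OrthonormalOn.mono hv hsupp)
    (fun i hi => hev i (hsupp i hi)) hT ht0 (fun j hj => ?_) hdiag
  have hj' : r ≤ (j : ℕ) ∧ (j : ℕ) < r + s := by
    by_contra h
    exact hj (htz j (by omega))
  simp [hev j hj'.2, ha0 j hj'.1]
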